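/- Let K ∈ ℝ, N > 1, 0 < D ≤ D_{K,N}, κ := K/(N-1). The density h¹(x) := s_κ(x)^{N-1} on (0,D) satisfies the MCP(K,N) density condition, i.e. (s_κ(D-x₁)/s_κ(D-x₀))^{N-1} ≤ h¹(x₁)/h¹(x₀) ≤ (s_κ(x₁)/s_κ(x₀))^{N-1} for all 0 < x₀ ≤ x₁ < D. -/
import Mathlib


open Real

/-- The comparison function `s_κ`. -/
noncomputable def sk (κ θ : ℝ) : ℝ :=
  if 0 < κ then Real.sin (Real.sqrt κ * θ) / Real.sqrt κ
  else if κ = 0 then θ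
  else Real.sinh (Real.sqrt (-κ) * θ) / Real.sqrt (-κ)

/-- The MCP(K,N) density condition on `(0, D)` (condition of Lemma 3.2):
two-sided ratio bounds with `κ = K/(N-1)`. -/
def mcpCond (K N D : ℝ) (h : ℝ → ℝ) : Prop :=
  ∀ x₀ x₁ : ℝ, 0 < x₀ → x₀ ≤ x₁ → x₁ < D →
    (sk (K / (N - 1)) (D - x₁) / sk (K / (N - 1)) (D - x₀)) ^ (N - 1) ≤ h x₁ / h x₀ ∧
    h x₁ / h x₀ ≤ (sk (K / (N - 1)) x₁ / sk (K / (N - 1)) x₀) ^ (N - 1)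

/-- The generalized cotangent `cot_{K,N}`. -/
noncomputable def cotKN (K N x : ℝ) : ℝ :=
  if 0 < K then Real.sqrt (K * (N - 1)) * Real.cos (Real.sqrt (K / (N - 1)) * x) /
      Real.sin (Real.sqrt (K / (N - 1)) * x)
  else if K = 0 then (N - 1) / x
  else Real.sqrt (-K * (N - 1)) * Real.cosh (Real.sqrt (-K / (N - 1)) * x) /
      Real.sinh (Real.sqrt (-K / (N - 1)) * x)

lemma sk_pos {κ x : ℝ} (hx : 0 < x) (hπ : 0 < κ → Real.sqrt κ * x < Real.pi) :
    0 < sk κ x := by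
  unfold sk
  rcases lt_trichotomy κ 0 with h | h | h
  · rw [if_neg (by linarith), if_neg (by linarith)]
    have hs : 0 < Real.sqrt (-κ) := Real.sqrt_pos.2 (by linarith)
    exact div_pos (Real.sinh_pos_iff.2 (by positivity)) hs
  · rw [if_neg (by simp [h]), if_pos h]
    exact hx
  · rw [if_pos h]
    have hs : 0 < Real.sqrt κ := Real.sqrt_pos.2 h
    exact div_pos (Real.sin_pos_of_pos_of_lt_pi (by positivity) (hπ h)) hs

lemma sk_key {κ D x₀ x₁ : ℝ} (h0 : 0 < x₀) (h01 : x₀ ≤ x₁) (h1 : x₁ < D)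
    (hπ : 0 < κ → Real.sqrt κ * D ≤ Real.pi) :
    sk κ (D - x₁) * sk κ x₀ ≤ sk κ (D - x₀) * sk κ x₁ := by
  unfold sk
  rcases lt_trichotomy κ 0 with h | h | h
  · simp only [if_neg (by linarith : ¬ (0 : ℝ) < κ), if_neg (by linarith : κ ≠ 0)]
    have hs : 0 < Real.sqrt (-κ) := Real.sqrt_pos.2 (by linarith)
    set β := Real.sqrt (-κ)
    have key : Real.sinh (β * (D - x₁)) * Real.sinh (β * x₀) ≤
        Real.sinh (β * (D - x₀)) * Real.sinh (β * x₁) := by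
      have e1 : β * (D - x₁) = β * D - β * x₁ := by ring
      have e2 : β * (D - x₀) = β * D - β * x₀ := by ring
      rw [e1, e2]
      have expand : Real.sinh (β * D - β * x₀) * Real.sinh (β * x₁) -
          Real.sinh (β * D - β * x₁) * Real.sinh (β * x₀) =
          Real.sinh (β * D) * Real.sinh (β * x₁ - β * x₀) := by
        rw [Real.sinh_sub, Real.sinh_sub, Real.sinh_sub]; ring
      have h2 : 0 < Real.sinh (β * D) := Real.sinh_pos_iff.2 (mul_pos hs (by linarith))
      have h3 : 0 ≤ Real.sinh (β * x₁ - β * x₀) := by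
        rw [Real.sinh_nonneg_iff]; nlinarith
      nlinarith
    rw [div_mul_div_comm, div_mul_div_comm]
    gcongr
  · simp only [if_neg (by linarith : ¬ (0:ℝ) < κ), if_pos h]
    nlinarith
  · simp only [if_pos h]
    have hs : 0 < Real.sqrt κ := Real.sqrt_pos.2 h
    set β := Real.sqrt κ
    have hcπ : β * D ≤ Real.pi := hπ h
    have key : Real.sin (β * (D - x₁)) * Real.sin (β * x₀) ≤
        Real.sin (β * (D - x₀)) * Real.sin (β * x₁) := by
      have e1 : β * (D - x₁) = β * D - β * x₁ := by ring
      have e2 : β * (D - x₀) = β * D - β * x₀ := by ring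
      rw [e1, e2]
      have expand : Real.sin (β * D - β * x₀) * Real.sin (β * x₁) -
          Real.sin (β * D - β * x₁) * Real.sin (β * x₀) =
          Real.sin (β * D) * Real.sin (β * x₁ - β * x₀) := by
        rw [Real.sin_sub, Real.sin_sub, Real.sin_sub]; ring
      have h2 : 0 ≤ Real.sin (β * D) :=
        Real.sin_nonneg_of_nonneg_of_le_pi (by nlinarith) hcπ
      have h3 : 0 ≤ Real.sin (β * x₁ - β * x₀) := by
        apply Real.sin_nonneg_of_nonneg_of_le_pi
        · nlinarith
        · nlinarith
      nlinarith
    rw [div_mul_div_comm, div_mul_div_comm]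
    gcongr

/-- the density `h¹(x) := s_κ(x)^{N-1}` satisfies the MCP(K,N)
density condition on `(0,D)`. -/
theorem h1_mcpCond (K N D : ℝ) (hN : 1 < N) (hD : 0 < D)
    (hDKN : 0 < K → D ≤ Real.pi / Real.sqrt (K / (N - 1))) :
    mcpCond K N D (fun x => sk (K / (N - 1)) x ^ (N - 1)) := by
  intro x₀ x₁ hx0 hx01 hx1
  set κ := K / (N - 1) with hκdef
  have hN1 : 0 < N - 1 := by linarith
  have hπ : 0 < κ → Real.sqrt κ * D ≤ Real.pi := by
    intro hκ
    have hK : 0 < K := by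
      by_contra hK
      push_neg at hK
      have : κ ≤ 0 := div_nonpos_of_nonpos_of_nonneg hK hN1.le
      linarith
    have hs : 0 < Real.sqrt κ := Real.sqrt_pos.2 hκ
    have := hDKN hK
    rw [le_div_iff₀ hs] at this
    linarith [this]
  have hx1D : x₀ < D := lt_of_le_of_lt hx01 hx1
  have p0 : 0 < sk κ x₀ := sk_pos hx0 (fun hκ => by
    have hs : 0 < Real.sqrt κ := Real.sqrt_pos.2 hκ
    have := hπ hκ
    nlinarith)
  have p1 : 0 < sk κ x₁ := sk_pos (lt_of_lt_of_le hx0 hx01) (fun hκ => by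
    have hs : 0 < Real.sqrt κ := Real.sqrt_pos.2 hκ
    have := hπ hκ
    nlinarith)
  have q0 : 0 < sk κ (D - x₀) := sk_pos (by linarith) (fun hκ => by
    have hs : 0 < Real.sqrt κ := Real.sqrt_pos.2 hκ
    have := hπ hκ
    nlinarith)
  have q1 : 0 < sk κ (D - x₁) := sk_pos (by linarith) (fun hκ => by
    have hs : 0 < Real.sqrt κ := Real.sqrt_pos.2 hκ
    have := hπ hκ
    nlinarith)
  have key := sk_key hx0 hx01 hx1 hπ
  have heq : sk κ x₁ ^ (N - 1) / sk κ x₀ ^ (N - 1) =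
      (sk κ x₁ / sk κ x₀) ^ (N - 1) := by
    rw [Real.div_rpow p1.le p0.le]
  constructor
  · simp only
    rw [heq]
    apply Real.rpow_le_rpow (by positivity) _ hN1.le
    rw [div_le_div_iff₀ q0 p0]
    linarith [key]
  · simp only
    rw [heq]
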